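/- Let H be an inner product space and x_1,…,x_n ∈ H. Then (∑_{i=1}^n ‖x_i‖)² ≤ ‖∑_{i=1}^n x_i‖² + (n²(n²−1)/12) · max_{1 ≤ k ≤ n−1} ‖Δx_k‖², where Δx_k := x_{k+1} − x_k. -/

import Mathlib

open Finset RCLike

/-!
Expanding both squares, `(∑ ‖xᵢ‖)² - ‖∑ xᵢ‖² = ∑ᵢⱼ (‖xᵢ‖‖xⱼ‖ - Re⟪xᵢ, xⱼ⟫)`, and each summand is at
most `‖xᵢ - xⱼ‖² / 2`. Walking from `xᵢ` to `xⱼ` one step at a time gives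
`‖xᵢ - xⱼ‖ ≤ |i - j| · max ‖Δxₖ‖`, and `∑ᵢⱼ (i - j)² = n²(n² - 1)/6` over `1 ≤ i, j ≤ n`.
-/

section InnerProductSpace

variable {H : Type*} [NormedAddCommGroup H]

lemma norm_mul_norm_le_re_inner_add_norm_sub_sq {𝕜 : Type*} [RCLike 𝕜] [InnerProductSpace 𝕜 H]
    (a b : H) :
    ‖a‖ * ‖b‖ ≤ re (inner 𝕜 a b) + ‖a - b‖ ^ 2 / 2 := by
  nlinarith [norm_sub_sq (𝕜 := 𝕜) a b, sq_nonneg (‖a‖ - ‖b‖)]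

lemma norm_sum_sq_eq_sum_sum_re_inner {𝕜 : Type*} [RCLike 𝕜] [InnerProductSpace 𝕜 H] {ι : Type*}
    (s : Finset ι) (x : ι → H) :
    ‖∑ i ∈ s, x i‖ ^ 2 = ∑ i ∈ s, ∑ j ∈ s, re (inner 𝕜 (x i) (x j)) := by
  simp only [norm_sq_eq_re_inner (𝕜 := 𝕜), sum_inner, inner_sum, map_sum]
  exact sum_comm

lemma sq_sum_norm_le_sq_norm_sum_add (𝕜 : Type*) [RCLike 𝕜] [InnerProductSpace 𝕜 H] {ι : Type*}
    (s : Finset ι) (x : ι → H) :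
    (∑ i ∈ s, ‖x i‖) ^ 2 ≤ ‖∑ i ∈ s, x i‖ ^ 2 + (∑ i ∈ s, ∑ j ∈ s, ‖x i - x j‖ ^ 2) / 2 := by
  calc (∑ i ∈ s, ‖x i‖) ^ 2 = ∑ i ∈ s, ∑ j ∈ s, ‖x i‖ * ‖x j‖ := by rw [sq, sum_mul_sum]
    _ ≤ ∑ i ∈ s, ∑ j ∈ s, (re (inner 𝕜 (x i) (x j)) + ‖x i - x j‖ ^ 2 / 2) :=
      sum_le_sum fun i _ => sum_le_sum fun j _ => norm_mul_norm_le_re_inner_add_norm_sub_sq _ _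
    _ = _ := by
      simp only [sum_add_distrib, ← sum_div, norm_sum_sq_eq_sum_sum_re_inner (𝕜 := 𝕜)]

end InnerProductSpace

lemma norm_sub_le_abs_sub_mul_of_norm_succ_sub_le {E : Type*} [SeminormedAddCommGroup E]
    {x : ℕ → E} {a b : ℕ} {c : ℝ} (hc : ∀ k ∈ Ico a b, ‖x (k + 1) - x k‖ ≤ c)
    {i j : ℕ} (hi : i ∈ Icc a b) (hj : j ∈ Icc a b) :
    ‖x i - x j‖ ≤ |(i : ℝ) - j| * c := by
  wlog hij : i ≤ j generalizing i j
  · rw [norm_sub_rev, abs_sub_comm]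
    exact this hj hi (le_of_not_ge hij)
  obtain ⟨hai, -⟩ := mem_Icc.1 hi
  obtain ⟨-, hjb⟩ := mem_Icc.1 hj
  rw [← dist_eq_norm, abs_sub_comm, abs_of_nonneg (by simpa using hij)]
  calc dist (x i) (x j) ≤ ∑ _k ∈ Ico i j, c :=
        dist_le_Ico_sum_of_dist_le hij fun hik hkj => by
          rw [dist_comm, dist_eq_norm]; exact hc _ (mem_Ico.2 ⟨by omega, by omega⟩)
    _ = ((j : ℝ) - i) * c := by simp [Nat.cast_sub hij]

lemma sum_Icc_id_cast (n : ℕ) : ∑ i ∈ Icc 1 n, (i : ℝ) = n * (n + 1) / 2 := by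
  induction n with
  | zero => simp
  | succ n ih => rw [sum_Icc_succ_top (by omega), ih]; push_cast; ring

lemma sum_Icc_sq_cast (n : ℕ) : ∑ i ∈ Icc 1 n, (i : ℝ) ^ 2 = n * (n + 1) * (2 * n + 1) / 6 := by
  induction n with
  | zero => simp
  | succ n ih => rw [sum_Icc_succ_top (by omega), ih]; push_cast; ring

lemma sum_Icc_sum_Icc_sub_sq (n : ℕ) :
    ∑ i ∈ Icc 1 n, ∑ j ∈ Icc 1 n, ((i : ℝ) - j) ^ 2 = (n : ℝ) ^ 2 * ((n : ℝ) ^ 2 - 1) / 6 := by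
  simp only [sub_sq, sum_add_distrib, sum_sub_distrib, sum_const, Nat.card_Icc, ← mul_sum,
    ← sum_mul, sum_Icc_id_cast, sum_Icc_sq_cast, nsmul_eq_mul]
  push_cast
  ring

theorem stmt_11_general {𝕜 H : Type*} [RCLike 𝕜] [NormedAddCommGroup H] [InnerProductSpace 𝕜 H]
    (n : ℕ) (x : ℕ → H)
    (hne : (Finset.Icc 1 (n - 1)).Nonempty) :
    (∑ i ∈ Finset.Icc 1 n, ‖x i‖) ^ 2 ≤ ‖∑ i ∈ Finset.Icc 1 n, x i‖ ^ 2 +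
      ((n : ℝ) ^ 2 * ((n : ℝ) ^ 2 - 1) / 12) *
        (Finset.Icc 1 (n - 1)).sup' hne (fun k => ‖x (k + 1) - x k‖ ^ 2) := by
  set M := (Icc 1 (n - 1)).sup' hne (fun k => ‖x (k + 1) - x k‖ ^ 2)
  have hstep : ∀ k ∈ Ico 1 n, ‖x (k + 1) - x k‖ ≤ √M := fun k hk =>
    Real.le_sqrt_of_sq_le (le_sup' (fun k => ‖x (k + 1) - x k‖ ^ 2)
      (by simp only [mem_Ico, mem_Icc] at hk ⊢; omega))
  have hpair : ∀ i ∈ Icc 1 n, ∀ j ∈ Icc 1 n, ‖x i - x j‖ ^ 2 ≤ ((i : ℝ) - j) ^ 2 * M := by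
    intro i hi j hj
    have hM : 0 ≤ M := le_sup'_of_le _ hne.choose_spec (sq_nonneg _)
    calc ‖x i - x j‖ ^ 2 ≤ (|(i : ℝ) - j| * √M) ^ 2 :=
          pow_le_pow_left₀ (norm_nonneg _)
            (norm_sub_le_abs_sub_mul_of_norm_succ_sub_le hstep hi hj) 2
      _ = ((i : ℝ) - j) ^ 2 * M := by rw [mul_pow, sq_abs, Real.sq_sqrt hM]
  calc (∑ i ∈ Icc 1 n, ‖x i‖) ^ 2
      ≤ ‖∑ i ∈ Icc 1 n, x i‖ ^ 2 + (∑ i ∈ Icc 1 n, ∑ j ∈ Icc 1 n, ‖x i - x j‖ ^ 2) / 2 :=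
        sq_sum_norm_le_sq_norm_sum_add 𝕜 _ _
    _ ≤ ‖∑ i ∈ Icc 1 n, x i‖ ^ 2
          + (∑ i ∈ Icc 1 n, ∑ j ∈ Icc 1 n, ((i : ℝ) - j) ^ 2 * M) / 2 := by
        gcongr with i hi j hj; exact hpair i hi j hj
    _ = _ := by simp only [← sum_mul, sum_Icc_sum_Icc_sub_sq]; ring

theorem stmt_11 {𝕜 H : Type*} [RCLike 𝕜] [NormedAddCommGroup H] [InnerProductSpace 𝕜 H]
    (n : ℕ) (hn : 2 ≤ n) (x : ℕ → H)
    (hne : (Finset.Icc 1 (n - 1)).Nonempty) :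
    (∑ i ∈ Finset.Icc 1 n, ‖x i‖) ^ 2 ≤ ‖∑ i ∈ Finset.Icc 1 n, x i‖ ^ 2 +
      ((n : ℝ) ^ 2 * ((n : ℝ) ^ 2 - 1) / 12) *
        (Finset.Icc 1 (n - 1)).sup' hne (fun k => ‖x (k + 1) - x k‖ ^ 2) :=
  stmt_11_general (𝕜 := 𝕜) n x hne
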